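/- arXiv:1206.1151 — 2 statements merged into one kernel-verified Lean document; each statement's English description precedes it below -/
import Mathlib

section
/- In the chordal case with Gibbons–Tsarev equations holding, the families h_n = √α_n and h̃_n = √α_n · γ_n have the same rotation coefficients, and the ratios γ_n = h̃_n/h_n satisfy (1/(γ_m − γ_n)) ∂γ_n/∂λ_m = α_m/(γ_m − γ_n)² = ∂(log h_n)/∂λ_m for m ≠ n. -/
/-- Partial derivative of a function on `Fin K → ℝ` in the `m`-th coordinate direction. -/
noncomputable def pd {K : ℕ} (f : (Fin K → ℝ) → ℝ) (m : Fin K) (Λ : Fin K → ℝ) : ℝ :=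
  fderiv ℝ f Λ (Pi.single m 1)

lemma hasFDerivAt_sqrt_comp {K : ℕ} (α : (Fin K → ℝ) → ℝ) (hαs : ContDiff ℝ (⊤ : ℕ∞) α)
    (Λ : Fin K → ℝ) (h : 0 < α Λ) :
    HasFDerivAt (fun Λ' => Real.sqrt (α Λ'))
      ((1 / (2 * Real.sqrt (α Λ))) • fderiv ℝ α Λ) Λ := by
  exact (Real.hasDerivAt_sqrt h.ne').comp_hasFDerivAt Λ
    ((hαs.differentiable (by simp)) Λ).hasFDerivAt

lemma pd_sqrt {K : ℕ} (α : (Fin K → ℝ) → ℝ) (hαs : ContDiff ℝ (⊤ : ℕ∞) α)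
    (m : Fin K) (Λ : Fin K → ℝ) (h : 0 < α Λ) :
    pd (fun Λ' => Real.sqrt (α Λ')) m Λ = pd α m Λ / (2 * Real.sqrt (α Λ)) := by
  unfold pd
  rw [(hasFDerivAt_sqrt_comp α hαs Λ h).fderiv]
  simp [div_eq_mul_inv]; ring

/-- In the chordal case, h_n = √α_n and h̃_n = √α_n·γ_n have the same rotation
coefficients, and the ratios γ_n = h̃_n/h_n satisfy
(1/(γ_m − γ_n)) ∂γ_n/∂λ_m = α_m/(γ_m − γ_n)² = ∂(log h_n)/∂λ_m for m ≠ n. -/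
theorem chordal_GT_Combescure {K : ℕ} (γ α : Fin K → (Fin K → ℝ) → ℝ)
    (hγs : ∀ n, ContDiff ℝ (⊤ : ℕ∞) (γ n)) (hαs : ∀ n, ContDiff ℝ (⊤ : ℕ∞) (α n))
    (hsep : ∀ m n, m ≠ n → ∀ Λ, γ m Λ ≠ γ n Λ)
    (hpos : ∀ n Λ, 0 < α n Λ) (hγ0 : ∀ n Λ, γ n Λ ≠ 0)
    (hGT1 : ∀ m n, m ≠ n → ∀ Λ,
      pd (γ n) m Λ = α m Λ / (γ m Λ - γ n Λ))
    (hGT2 : ∀ m n, m ≠ n → ∀ Λ,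
      pd (α n) m Λ = 2 * α m Λ * α n Λ / (γ m Λ - γ n Λ) ^ 2) :
    (∀ m n, m ≠ n → ∀ Λ,
      (1 / (Real.sqrt (α m Λ) * γ m Λ))
          * pd (fun Λ' => Real.sqrt (α n Λ') * γ n Λ') m Λ
        = (1 / Real.sqrt (α m Λ)) * pd (fun Λ' => Real.sqrt (α n Λ')) m Λ)
    ∧ (∀ m n, m ≠ n → ∀ Λ,
      (1 / (γ m Λ - γ n Λ)) * pd (γ n) m Λ = α m Λ / (γ m Λ - γ n Λ) ^ 2
      ∧ pd (fun Λ' => Real.log (Real.sqrt (α n Λ'))) m Λ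
          = α m Λ / (γ m Λ - γ n Λ) ^ 2) := by
  have hsq : ∀ n (Λ : Fin K → ℝ), 0 < Real.sqrt (α n Λ) :=
    fun n Λ => Real.sqrt_pos.mpr (hpos n Λ)
  have hpd_sqrt : ∀ m n (Λ : Fin K → ℝ), m ≠ n →
      pd (fun Λ' => Real.sqrt (α n Λ')) m Λ
        = α m Λ * Real.sqrt (α n Λ) / (γ m Λ - γ n Λ) ^ 2 := by
    intro m n Λ hmn
    rw [pd_sqrt (α n) (hαs n) m Λ (hpos n Λ), hGT2 m n hmn Λ]
    have h1 : Real.sqrt (α n Λ) ≠ 0 := (hsq n Λ).ne'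
    have h2 : (γ m Λ - γ n Λ) ≠ 0 := sub_ne_zero.mpr (hsep m n hmn Λ)
    have h3 : Real.sqrt (α n Λ) * Real.sqrt (α n Λ) = α n Λ :=
      Real.mul_self_sqrt (hpos n Λ).le
    rw [← h3]
    field_simp
    rw [Real.sqrt_sq (hsq n Λ).le]
  refine ⟨?_, ?_⟩
  · intro m n hmn Λ
    have hprod : pd (fun Λ' => Real.sqrt (α n Λ') * γ n Λ') m Λ
        = pd (fun Λ' => Real.sqrt (α n Λ')) m Λ * γ n Λ
          + Real.sqrt (α n Λ) * pd (γ n) m Λ := by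
      unfold pd
      have h1 := hasFDerivAt_sqrt_comp (α n) (hαs n) Λ (hpos n Λ)
      have h2 := ((hγs n).differentiable (by simp) Λ).hasFDerivAt
      rw [(show HasFDerivAt (fun Λ' => Real.sqrt (α n Λ') * γ n Λ') _ Λ from h1.mul h2).fderiv]
      simp [h1.fderiv]
      ring
    rw [hprod, hpd_sqrt m n Λ hmn, hGT1 m n hmn Λ]
    have h2 : (γ m Λ - γ n Λ) ≠ 0 := sub_ne_zero.mpr (hsep m n hmn Λ)
    have h1 : Real.sqrt (α m Λ) ≠ 0 := (hsq m Λ).ne'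
    have h3 := hγ0 m Λ
    field_simp
    ring
  · intro m n hmn Λ
    have h2 : (γ m Λ - γ n Λ) ≠ 0 := sub_ne_zero.mpr (hsep m n hmn Λ)
    constructor
    · rw [hGT1 m n hmn Λ, pow_two, one_div, inv_mul_eq_div, div_div]
    · have hlog : pd (fun Λ' => Real.log (Real.sqrt (α n Λ'))) m Λ
          = (Real.sqrt (α n Λ))⁻¹ * pd (fun Λ' => Real.sqrt (α n Λ')) m Λ := by
        unfold pd
        have h1 := hasFDerivAt_sqrt_comp (α n) (hαs n) Λ (hpos n Λ)
        have hl : HasFDerivAt (fun Λ' => Real.log (Real.sqrt (α n Λ')))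
            ((Real.sqrt (α n Λ))⁻¹ • ((1 / (2 * Real.sqrt (α n Λ))) • fderiv ℝ (α n) Λ)) Λ :=
          (Real.hasDerivAt_log (hsq n Λ).ne').comp_hasFDerivAt (f := fun Λ' => Real.sqrt (α n Λ')) Λ h1
        rw [hl.fderiv]
        simp [h1.fderiv]
      rw [hlog, hpd_sqrt m n Λ hmn]
      have h3 : Real.sqrt (α n Λ) * Real.sqrt (α n Λ) = α n Λ :=
        Real.mul_self_sqrt (hpos n Λ).le
      have h1 : Real.sqrt (α n Λ) ≠ 0 := (hsq n Λ).ne'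
      field_simp
end

section
/- Let λ(p) = ∏_{i=1}^M (p − b_i)^{κ_i} exp(Σ_{k=1}^N c_k p^{−k}) and define the inner product (∂, ∂′) = Σ_{n=1}^{M+N} Res_{p=γ_n} [ ∂ log λ · ∂′ log λ / (d log λ/d log p) · d log p ], where γ_n are the M+N distinct critical points of log λ. Then (∂/∂b_i, ∂/∂b_j) = −δ_{ij} κ_i/b_i² and (∂/∂b_i, ∂/∂c_k) = δ_{kN} κ_i/(N b_i c_N). -/
/-!
Every pairing is a sum over the simple zeros `γ n` of `Q p = Mt * ∏ n, (p - γ n)` of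
`R (γ n) / ((γ n - a) * Q' (γ n))`, with `R` a polynomial of degree `< M + N` and a single further
pole `a` (`a = b i` on the diagonal of the `b`-block, `a = 0` otherwise). The residues of
`R / ((p - a) * Q)` add up to zero and there is none at infinity, so the sum is `-R a / Q a`; in
polynomial terms this is Lagrange interpolation of `R` at the nodes `γ n`, evaluated at `a`.
The values `Q (b i)` and `Q 0` are read off from `Q = p ^ (N + 1) * ∏ l, (p - b l) * d log λ / dp`.
-/

open Polynomial Finset

namespace Lagrange

theorem degree_C_mul_X_pow_mul_nodal_lt {R : Type*} [CommRing R] [Nontrivial R] {ι : Type*}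
    {s : Finset ι} (v : ι → R) (a : R) {e n : ℕ} (h : e + #s < n) :
    (C a * X ^ e * nodal s v).degree < (n : WithBot ℕ) := by
  refine degree_le_natDegree.trans_lt (WithBot.coe_lt_coe.mpr (lt_of_le_of_lt ?_ h))
  refine natDegree_mul_le.trans (add_le_add (natDegree_mul_le.trans ?_) natDegree_nodal.le)
  simp

variable {F : Type*} [Field F] {ι : Type*} [DecidableEq ι] {s : Finset ι} {v : ι → F}

theorem sum_eval_div_sub_mul_prod_erase (hvs : Set.InjOn v s) {R : F[X]} (hR : R.degree < #s)
    {x : F} (hx : ∀ i ∈ s, x ≠ v i) :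
    ∑ i ∈ s, R.eval (v i) / ((v i - x) * ∏ j ∈ s.erase i, (v i - v j))
      = -R.eval x / ∏ i ∈ s, (x - v i) := by
  have h := eval_interpolate_not_at_node (fun i => R.eval (v i)) hx
  rw [← eq_interpolate hvs hR, eval_nodal] at h
  have hne : ∏ i ∈ s, (x - v i) ≠ 0 :=
    prod_ne_zero_iff.mpr fun i hi => sub_ne_zero.mpr (hx i hi)
  rw [h, ← mul_neg, mul_div_cancel_left₀ _ hne, ← sum_neg_distrib]
  refine sum_congr rfl fun i _ => ?_
  rw [nodalWeight, prod_inv_distrib, ← neg_sub x (v i)]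
  field_simp

end Lagrange

section Deriv

variable {𝕜 : Type*} [NontriviallyNormedField 𝕜] {ι : Type*} [DecidableEq ι]

theorem deriv_const_mul_prod_sub {s : Finset ι} {i : ι} (hi : i ∈ s) (v : ι → 𝕜) (m : 𝕜) :
    deriv (fun p => m * ∏ j ∈ s, (p - v j)) (v i) = m * ∏ j ∈ s.erase i, (v i - v j) := by
  have h : (fun p => m * ∏ j ∈ s, (p - v j)) = fun p => (C m * Lagrange.nodal s v).eval p := by
    funext p; simp [Lagrange.eval_nodal]
  rw [h, Polynomial.deriv, derivative_C_mul, eval_mul, eval_C,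
    Lagrange.eval_nodal_derivative_eval_node_eq hi, Lagrange.eval_nodal]

theorem sum_eval_div_sub_mul_deriv [Fintype ι] {v : ι → 𝕜} (hv : Function.Injective v) (m : 𝕜)
    {R : 𝕜[X]} (hR : R.degree < Fintype.card ι) {x : 𝕜} (hx : ∀ i, v i ≠ x) :
    ∑ i, R.eval (v i) / ((v i - x) * deriv (fun p => m * ∏ j, (p - v j)) (v i))
      = -R.eval x / (m * ∏ j, (x - v j)) := by
  have h := Lagrange.sum_eval_div_sub_mul_prod_erase hv.injOn (by rwa [card_univ])
    fun i _ => (hx i).symm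
  have hterm : ∀ i, R.eval (v i) / ((v i - x) * deriv (fun p => m * ∏ j, (p - v j)) (v i))
      = R.eval (v i) / ((v i - x) * ∏ j ∈ univ.erase i, (v i - v j)) / m := fun i => by
    rw [deriv_const_mul_prod_sub (mem_univ i), div_div]
    ring
  rw [sum_congr rfl fun i _ => hterm i, ← sum_div, h, div_div, mul_comm]

end Deriv

section LogDerivNumerator

variable {M N : ℕ} (b κ : Fin M → ℂ) (c : Fin N → ℂ)

noncomputable def logDerivNumerator : ℂ[X] :=
  ∑ i, C (κ i) * X ^ (N + 1) * Lagrange.nodal (univ.erase i) b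
    - ∑ k : Fin N, C (((k : ℕ) + 1 : ℂ) * c k) * X ^ (N - 1 - (k : ℕ)) * Lagrange.nodal univ b

theorem eval_logDerivNumerator {p : ℂ} (hp0 : p ≠ 0) (hpb : ∀ i, p ≠ b i) :
    (logDerivNumerator b κ c).eval p
      = p ^ (N + 1) * (∏ i, (p - b i)) * ((∑ i, κ i / (p - b i))
          - ∑ k : Fin N, ((k : ℕ) + 1 : ℂ) * c k * p ^ (-(k : ℤ) - 2)) := by
  simp only [logDerivNumerator, eval_sub, eval_finsetSum, eval_mul, eval_C, eval_pow, eval_X,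
    Lagrange.eval_nodal]
  rw [mul_sub, mul_sum, mul_sum]
  congr 1
  · refine sum_congr rfl fun i _ => ?_
    have hpi : p - b i ≠ 0 := sub_ne_zero.mpr (hpb i)
    rw [← mul_prod_erase univ (fun l => p - b l) (mem_univ i)]
    field_simp
  · refine sum_congr rfl fun k _ => ?_
    have hpow : p ^ (N - 1 - (k : ℕ)) = p ^ (N + 1) * p ^ (-(k : ℤ) - 2) := by
      rw [← zpow_natCast, ← zpow_natCast, ← zpow_add₀ hp0]
      congr 1
      omega
    rw [hpow]
    ring

theorem eval_logDerivNumerator_node (i : Fin M) :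
    (logDerivNumerator b κ c).eval (b i)
      = κ i * b i ^ (N + 1) * ∏ l ∈ univ.erase i, (b i - b l) := by
  have hself : ∏ l, (b i - b l) = 0 := prod_eq_zero (mem_univ i) (sub_self _)
  simp only [logDerivNumerator, eval_sub, eval_finsetSum, eval_mul, eval_C, eval_pow, eval_X,
    Lagrange.eval_nodal, hself, mul_zero, sum_const_zero, sub_zero]
  refine (sum_eq_single i (fun j _ hji => ?_) (by simp)).trans rfl
  rw [prod_eq_zero (mem_erase.mpr ⟨Ne.symm hji, mem_univ i⟩) (sub_self _), mul_zero]

theorem eval_logDerivNumerator_zero (hN : 1 ≤ N) :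
    (logDerivNumerator b κ c).eval 0
      = -(N * c ⟨N - 1, Nat.sub_one_lt_of_le hN le_rfl⟩ * ∏ l, -b l) := by
  simp only [logDerivNumerator, eval_sub, eval_finsetSum, eval_mul, eval_C, eval_pow, eval_X,
    Lagrange.eval_nodal, zero_sub, zero_pow (Nat.succ_ne_zero N), mul_zero, zero_mul,
    sum_const_zero]
  rw [sum_eq_single ⟨N - 1, by omega⟩ (fun k _ hk => ?_) (by simp)]
  · have hN' : ((N - 1 : ℕ) : ℂ) + 1 = N := by norm_cast; omega
    simp [hN']
  · have hk' : N - 1 - (k : ℕ) ≠ 0 := fun h => hk (Fin.ext (by simp; omega))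
    rw [zero_pow hk', mul_zero, zero_mul]

theorem eval_logDerivNumerator_eq_of_logDeriv {ι : Type*} [Fintype ι] (γ : ι → ℂ) (m : ℂ)
    (hlog : ∀ p : ℂ, p ≠ 0 → (∀ i, p ≠ b i) →
      (∑ i, κ i / (p - b i)) - ∑ k : Fin N, ((k : ℕ) + 1 : ℂ) * c k * p ^ (-(k : ℤ) - 2)
        = m * (∏ n, (p - γ n)) / (p ^ (N + 1) * ∏ i, (p - b i)))
    (x : ℂ) : m * ∏ n, (x - γ n) = (logDerivNumerator b κ c).eval x := by
  suffices h : C m * Lagrange.nodal univ γ = logDerivNumerator b κ c by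
    rw [← h, eval_mul, eval_C, Lagrange.eval_nodal]
  refine eq_of_infinite_eval_eq _ _ (((Set.finite_range b).insert 0).infinite_compl.mono ?_)
  intro p hp
  simp only [Set.mem_compl_iff, Set.mem_insert_iff, Set.mem_range, not_or, not_exists] at hp
  have hpb : ∀ i, p ≠ b i := fun i h => hp.2 i h.symm
  have hden : p ^ (N + 1) * ∏ i, (p - b i) ≠ 0 :=
    mul_ne_zero (pow_ne_zero _ hp.1) (prod_ne_zero_iff.mpr fun i _ => sub_ne_zero.mpr (hpb i))
  simp only [Set.mem_ofPred_eq, eval_mul, eval_C, Lagrange.eval_nodal,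
    eval_logDerivNumerator b κ c hp.1 hpb, hlog p hp.1 hpb]
  exact (mul_div_cancel₀ _ hden).symm

end LogDerivNumerator

section ResidueSums

variable {M N : ℕ} {b κ : Fin M → ℂ} {γ : Fin (M + N) → ℂ} {m : ℂ}

theorem sum_residues_bb_self (hN : 1 ≤ N) (hγ : Function.Injective γ) (hγ0 : ∀ n, γ n ≠ 0)
    (hb : Function.Injective b) {i : Fin M} (hbi : b i ≠ 0) (hγb : ∀ n, γ n ≠ b i)
    (hQ : m * ∏ n, (b i - γ n) = κ i * b i ^ (N + 1) * ∏ l ∈ univ.erase i, (b i - b l)) :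
    ∑ n, κ i * κ i * γ n ^ N * (∏ l, (γ n - b l)) /
        ((γ n - b i) * (γ n - b i) * γ n * deriv (fun p => m * ∏ n', (p - γ n')) (γ n))
      = -κ i / b i ^ 2 := by
  set R := C (κ i * κ i) * X ^ (N - 1) * Lagrange.nodal (univ.erase i) b
  have hR : R.degree < Fintype.card (Fin (M + N)) :=
    Lagrange.degree_C_mul_X_pow_mul_nodal_lt b _ (by simp; omega)
  have hterm : ∀ n, κ i * κ i * γ n ^ N * (∏ l, (γ n - b l)) /
        ((γ n - b i) * (γ n - b i) * γ n * deriv (fun p => m * ∏ n', (p - γ n')) (γ n))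
      = R.eval (γ n) / ((γ n - b i) * deriv (fun p => m * ∏ n', (p - γ n')) (γ n)) := by
    intro n
    have hγbi : γ n - b i ≠ 0 := sub_ne_zero.mpr (hγb n)
    have hγ0n := hγ0 n
    simp only [R, eval_mul, eval_C, eval_pow, eval_X, Lagrange.eval_nodal]
    rw [← mul_prod_erase univ (fun l => γ n - b l) (mem_univ i), ← pow_sub_one_mul (by omega)]
    field_simp
  have hP : ∏ l ∈ univ.erase i, (b i - b l) ≠ 0 :=
    prod_ne_zero_iff.mpr fun l hl => sub_ne_zero.mpr (hb.ne (mem_erase.mp hl).1.symm)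
  rw [sum_congr rfl fun n _ => hterm n, sum_eval_div_sub_mul_deriv hγ m hR hγb, hQ]
  simp only [R, eval_mul, eval_C, eval_pow, eval_X, Lagrange.eval_nodal]
  have hpow : b i ^ (N + 1) = b i ^ (N - 1) * b i ^ 2 := by
    rw [← pow_add]; congr 1; omega
  rw [hpow]
  field_simp

theorem sum_residues_bb_of_ne (hN : 1 ≤ N) (hγ : Function.Injective γ) (hγ0 : ∀ n, γ n ≠ 0)
    {i j : Fin M} (hij : i ≠ j) (hγbi : ∀ n, γ n ≠ b i) (hγbj : ∀ n, γ n ≠ b j) :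
    ∑ n, κ i * κ j * γ n ^ N * (∏ l, (γ n - b l)) /
        ((γ n - b i) * (γ n - b j) * γ n * deriv (fun p => m * ∏ n', (p - γ n')) (γ n))
      = 0 := by
  have hj : j ∈ univ.erase i := mem_erase.mpr ⟨hij.symm, mem_univ j⟩
  set R := C (κ i * κ j) * X ^ N * Lagrange.nodal ((univ.erase i).erase j) b
  have hR : R.degree < Fintype.card (Fin (M + N)) := by
    refine Lagrange.degree_C_mul_X_pow_mul_nodal_lt b _ ?_
    rw [card_erase_of_mem hj, card_erase_of_mem (mem_univ i)]
    simp
    omega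
  have hterm : ∀ n, κ i * κ j * γ n ^ N * (∏ l, (γ n - b l)) /
        ((γ n - b i) * (γ n - b j) * γ n * deriv (fun p => m * ∏ n', (p - γ n')) (γ n))
      = R.eval (γ n) / ((γ n - 0) * deriv (fun p => m * ∏ n', (p - γ n')) (γ n)) := by
    intro n
    have hγbi' : γ n - b i ≠ 0 := sub_ne_zero.mpr (hγbi n)
    have hγbj' : γ n - b j ≠ 0 := sub_ne_zero.mpr (hγbj n)
    simp only [R, eval_mul, eval_C, eval_pow, eval_X, Lagrange.eval_nodal, sub_zero]
    rw [← mul_prod_erase univ (fun l => γ n - b l) (mem_univ i),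
      ← mul_prod_erase (univ.erase i) (fun l => γ n - b l) hj]
    field_simp
  rw [sum_congr rfl fun n _ => hterm n, sum_eval_div_sub_mul_deriv hγ m hR hγ0]
  simp [R, zero_pow (by omega : N ≠ 0)]

theorem sum_residues_bc {cN : ℂ} (hγ : Function.Injective γ) (hγ0 : ∀ n, γ n ≠ 0)
    (hb0 : ∀ l, b l ≠ 0) {i : Fin M} (hγb : ∀ n, γ n ≠ b i) (k : Fin N)
    (hQ : m * ∏ n, (0 - γ n) = -(N * cN * ∏ l, -b l)) :
    ∑ n, -(κ i) * γ n ^ N * (∏ l, (γ n - b l)) /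
        ((γ n - b i) * γ n ^ ((k : ℕ) + 2) * deriv (fun p => m * ∏ n', (p - γ n')) (γ n))
      = (if (k : ℕ) + 1 = N then 1 else 0) * κ i / (N * b i * cN) := by
  set R := C (-κ i) * X ^ (N - 1 - (k : ℕ)) * Lagrange.nodal (univ.erase i) b
  have hR : R.degree < Fintype.card (Fin (M + N)) :=
    Lagrange.degree_C_mul_X_pow_mul_nodal_lt b _ (by simp; omega)
  have hterm : ∀ n, -(κ i) * γ n ^ N * (∏ l, (γ n - b l)) /
        ((γ n - b i) * γ n ^ ((k : ℕ) + 2) * deriv (fun p => m * ∏ n', (p - γ n')) (γ n))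
      = R.eval (γ n) / ((γ n - 0) * deriv (fun p => m * ∏ n', (p - γ n')) (γ n)) := by
    intro n
    have hγbi : γ n - b i ≠ 0 := sub_ne_zero.mpr (hγb n)
    have hγ0n := hγ0 n
    have hpow : γ n ^ N = γ n ^ (N - 1 - (k : ℕ)) * γ n ^ ((k : ℕ) + 1) := by
      rw [← pow_add]; congr 1; omega
    simp only [R, eval_mul, eval_C, eval_pow, eval_X, Lagrange.eval_nodal, sub_zero]
    rw [← mul_prod_erase univ (fun l => γ n - b l) (mem_univ i), hpow]
    field_simp
    ring
  rw [sum_congr rfl fun n _ => hterm n, sum_eval_div_sub_mul_deriv hγ m hR hγ0, hQ]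
  split_ifs with hk
  · have hP : ∏ l ∈ univ.erase i, -b l ≠ 0 :=
      prod_ne_zero_iff.mpr fun l _ => neg_ne_zero.mpr (hb0 l)
    simp only [R, eval_mul, eval_C, Lagrange.eval_nodal, zero_sub,
      show N - 1 - (k : ℕ) = 0 by omega, pow_zero, eval_one]
    rw [← mul_prod_erase univ (fun l => -b l) (mem_univ i)]
    field_simp
  · simp [R, zero_pow (by omega : N - 1 - (k : ℕ) ≠ 0)]

end ResidueSums

/-- For λ(p) = ∏ (p − b_i)^{κ_i} exp(Σ_{k=1}^N c_k p^{−k}) with the M+N critical points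
γ_n (roots of Q, where d log λ/dp = Q(p)/(p^{N+1} ∏ (p − b_i)), Q = M̃ ∏ (p − γ_n)),
the inner product (∂, ∂′) = Σ_n Res_{p=γ_n}[∂logλ·∂′logλ·(dlogλ/dlogp)⁻¹ dlogp]
satisfies (∂/∂b_i, ∂/∂b_j) = −δ_{ij} κ_i/b_i² and
(∂/∂b_i, ∂/∂c_k) = δ_{kN} κ_i/(N b_i c_N).  (Here `c k` stands for c_{k+1}.) -/
theorem radial_metric_caseII (M N : ℕ) (hN : 1 ≤ N)
    (b κ : Fin M → ℂ) (c : Fin N → ℂ) (γ : Fin (M + N) → ℂ)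
    (hb : Function.Injective b) (hb0 : ∀ i, b i ≠ 0)
    (hγinj : Function.Injective γ) (hγ0 : ∀ n, γ n ≠ 0) (hγb : ∀ n i, γ n ≠ b i)
    (Mt : ℂ)
    (cN : ℂ) (hcN : cN = c ⟨N - 1, by omega⟩)
    (hlog : ∀ p : ℂ, p ≠ 0 → (∀ i, p ≠ b i) →
      (∑ i, κ i / (p - b i))
          - ∑ k : Fin N, ((k : ℕ) + 1 : ℂ) * c k * p ^ (-(k : ℤ) - 2)
        = Mt * (∏ n, (p - γ n)) / (p ^ (N + 1) * ∏ i, (p - b i))) :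
    (∀ i j : Fin M,
      ∑ n, κ i * κ j * γ n ^ N * (∏ l, (γ n - b l)) /
          ((γ n - b i) * (γ n - b j) * γ n
            * deriv (fun p => Mt * ∏ n', (p - γ n')) (γ n))
        = -(if i = j then 1 else 0) * κ i / b i ^ 2)
    ∧ (∀ (i : Fin M) (k : Fin N),
      ∑ n, -(κ i) * γ n ^ N * (∏ l, (γ n - b l)) /
          ((γ n - b i) * γ n ^ ((k : ℕ) + 2)
            * deriv (fun p => Mt * ∏ n', (p - γ n')) (γ n))
        = (if (k : ℕ) + 1 = N then 1 else 0) * κ i / ((N : ℂ) * b i * cN)) := by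
  have hQ := eval_logDerivNumerator_eq_of_logDeriv b κ c γ Mt hlog
  refine ⟨fun i j => ?_, fun i k => ?_⟩
  · split_ifs with hij
    · subst hij
      rw [sum_residues_bb_self hN hγinj hγ0 hb (hb0 i) (hγb · i)
        ((hQ _).trans (eval_logDerivNumerator_node b κ c i))]
      ring
    · rw [sum_residues_bb_of_ne hN hγinj hγ0 hij (hγb · i) (hγb · j)]
      ring
  · subst hcN
    exact sum_residues_bc hγinj hγ0 hb0 (hγb · i) k
      ((hQ 0).trans (eval_logDerivNumerator_zero b κ c hN))
end
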